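/- If a prime p divides the power-sum denominator d_n, then p ≤ n+1. -/

import Mathlib

open Polynomial Finset

/-- `P` agrees at every natural `x` with the power sum `1^n + 2^n + ... + x^n`. -/
def evalPS (n : ℕ) (P : Polynomial ℚ) : Prop :=
  ∀ x : ℕ, P.eval (x : ℚ) = ∑ k ∈ Finset.range (x + 1), (k : ℚ) ^ n

/-- `P` agrees at every natural `x` with `1^n + 2^n + ... + (x-1)^n`. -/
def evalPS' (n : ℕ) (P : Polynomial ℚ) : Prop :=
  ∀ x : ℕ, P.eval (x : ℚ) = ∑ k ∈ Finset.range x, (k : ℚ) ^ n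

/-- all coefficients of `P` are integers. -/
def isIntPoly (P : Polynomial ℚ) : Prop := ∀ i, ∃ z : ℤ, P.coeff i = (z : ℚ)

/-- `d` is the least positive integer such that `d • P` has integer coefficients. -/
def isDenom (P : Polynomial ℚ) (d : ℕ) : Prop :=
  0 < d ∧ isIntPoly ((d : ℚ) • P) ∧
    ∀ e : ℕ, 0 < e → isIntPoly ((e : ℚ) • P) → d ≤ e

/-!
The power sum `P` satisfies `P(x + 1) - P(x) = (x + 1)^n`, so it has degree at most `n + 1` and
takes integer values at the naturals. By Newton's forward-difference formula such a polynomial is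
`∑_{k ≤ n+1} Δ^k P(0) · binom(X, k)` with integers `Δ^k P(0)`, and `k! · binom(X, k)` has integer
coefficients, so `(n + 1)! · P` has integer coefficients. The integers `e` for which `e · P` has
integer coefficients are closed under `gcd`, hence the least one, `d`, divides `(n + 1)!`.
-/

open scoped fwdDiff Nat

lemma Polynomial.eq_of_eval_natCast_eq {R : Type*} [CommRing R] [IsDomain R] [CharZero R]
    {P Q : R[X]} (h : ∀ x : ℕ, P.eval (x : R) = Q.eval (x : R)) : P = Q :=
  eq_of_infinite_eval_eq P Q <| (Set.infinite_range_of_injective Nat.cast_injective).mono <| by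
    rintro _ ⟨x, rfl⟩
    exact h x

lemma Polynomial.eval_natCast_eq_sum_fwdDiff_iter {R : Type*} [CommRing R] (P : R[X]) {N : ℕ}
    (hN : P.natDegree ≤ N) (x : ℕ) :
    P.eval (x : R) = ∑ k ∈ range (N + 1), x.choose k • (Δ_[1])^[k] P.eval 0 := by
  have newton := shift_eq_sum_fwdDiff_iter (1 : R) P.eval x 0
  rw [zero_add, nsmul_one] at newton
  rw [newton]
  calc ∑ k ∈ range (x + 1), x.choose k • (Δ_[1])^[k] P.eval 0
      = ∑ k ∈ range (x + N + 1), x.choose k • (Δ_[1])^[k] P.eval 0 := by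
        refine sum_subset (range_subset_range.2 (by omega)) fun k _ hk => ?_
        rw [Nat.choose_eq_zero_of_lt (by simpa using hk), zero_smul]
    _ = ∑ k ∈ range (N + 1), x.choose k • (Δ_[1])^[k] P.eval 0 := by
        refine (sum_subset (range_subset_range.2 (by omega)) fun k _ hk => ?_).symm
        rw [fwdDiff_iter_eq_zero_of_degree_lt (by simp at hk; omega), Pi.zero_apply, smul_zero]

lemma Polynomial.natDegree_le_of_fwdDiff_eval_eq {R : Type*} [CommRing R] [IsDomain R]
    [CharZero R] {P Q : R[X]} {m : ℕ} (hQ : Q.natDegree ≤ m) (h : Δ_[1] P.eval = Q.eval) :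
    P.natDegree ≤ m + 1 := by
  by_contra! hlt
  have hP : P ≠ 0 := by
    rintro rfl
    simp at hlt
  obtain ⟨j, hj⟩ : ∃ j, P.natDegree = j + 1 := ⟨P.natDegree - 1, by omega⟩
  -- the `(j + 1)`-st difference of `P` is the constant `leadingCoeff P * (j + 1)!`, while it is
  -- also the `j`-th difference of `Q`, which vanishes as `Q.natDegree < j`
  have htop := congrFun P.fwdDiff_iter_degree_eq_factorial 0
  rw [hj, Function.iterate_succ_apply, h, fwdDiff_iter_eq_zero_of_degree_lt (by omega)] at htop
  simp [hP, Nat.factorial_ne_zero] at htop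

lemma isIntPoly_iff_mem_liftsRing (P : ℚ[X]) :
    isIntPoly P ↔ P ∈ liftsRing (Int.castRingHom ℚ) := by
  rw [← lifts_iff_liftsRing, lifts_iff_coeff_lifts]
  simp [isIntPoly, eq_comm]

lemma isIntPoly_gcd_smul {P : ℚ[X]} {a b : ℕ} (ha : isIntPoly ((a : ℚ) • P))
    (hb : isIntPoly ((b : ℚ) • P)) : isIntPoly ((a.gcd b : ℚ) • P) := by
  rw [isIntPoly_iff_mem_liftsRing] at *
  have hbez : ((a.gcd b : ℤ) : ℚ) = a * a.gcdA b + b * a.gcdB b := by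
    exact_mod_cast congrArg (Int.cast : ℤ → ℚ) (Nat.gcd_eq_gcd_ab a b)
  have hsmul : (a.gcd b : ℚ) • P = a.gcdA b • ((a : ℚ) • P) + a.gcdB b • ((b : ℚ) • P) := by
    rw [← Int.cast_natCast, hbez]
    simp only [add_smul, mul_comm (a : ℚ), mul_comm (b : ℚ), mul_smul, Int.cast_smul_eq_zsmul]
  rw [hsmul]
  exact add_mem (zsmul_mem ha _) (zsmul_mem hb _)

lemma isDenom.dvd {P : ℚ[X]} {d e : ℕ} (hd : isDenom P d)
    (hint : isIntPoly ((e : ℚ) • P)) : d ∣ e := by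
  obtain ⟨hd_pos, hd_int, hd_min⟩ := hd
  have hle : d ≤ d.gcd e :=
    hd_min _ (Nat.gcd_pos_of_pos_left e hd_pos) (isIntPoly_gcd_smul hd_int hint)
  have hgcd : d.gcd e = d := le_antisymm (Nat.le_of_dvd hd_pos (Nat.gcd_dvd_left d e)) hle
  exact hgcd ▸ Nat.gcd_dvd_right d e

def IsIntValued (P : ℚ[X]) : Prop := ∀ x : ℕ, ∃ z : ℤ, P.eval (x : ℚ) = z

lemma IsIntValued.fwdDiff_iter_eval_zero {P : ℚ[X]} (hP : IsIntValued P) (k : ℕ) :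
    ∃ z : ℤ, (Δ_[1])^[k] P.eval 0 = z := by
  choose v hv using hP
  refine ⟨∑ j ∈ range (k + 1), (-1) ^ (k - j) * k.choose j * v j, ?_⟩
  rw [fwdDiff_iter_eq_sum_shift]
  push_cast
  refine sum_congr rfl fun j _ => ?_
  rw [zero_add, nsmul_one, hv, zsmul_eq_mul]
  push_cast
  ring

lemma IsIntValued.isIntPoly_factorial_smul {P : ℚ[X]} (hP : IsIntValued P) {N : ℕ}
    (hN : P.natDegree ≤ N) : isIntPoly ((N ! : ℚ) • P) := by
  choose c hc using hP.fwdDiff_iter_eval_zero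
  have binomial_expansion : (N ! : ℚ) • P = ∑ k ∈ range (N + 1),
      C ((c k * (N ! / k ! : ℕ) : ℤ) : ℚ) * (descPochhammer ℤ k).map (Int.castRingHom ℚ) := by
    refine eq_of_eval_natCast_eq fun x => ?_
    rw [eval_smul, eval_natCast_eq_sum_fwdDiff_iter P hN x, smul_eq_mul, mul_sum, eval_finsetSum]
    refine sum_congr rfl fun k hk => ?_
    have hdiv : N ! / k ! * k ! = N ! :=
      Nat.div_mul_cancel (Nat.factorial_dvd_factorial (by simpa [Nat.lt_succ_iff] using hk))
    rw [eval_mul, eval_C, descPochhammer_map, descPochhammer_eval_eq_descFactorial,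
      Nat.descFactorial_eq_factorial_mul_choose, hc, nsmul_eq_mul]
    have hdiv' : ((N ! / k ! : ℕ) : ℚ) * k ! = N ! := by exact_mod_cast hdiv
    simp only [Int.cast_mul, Int.cast_natCast, Nat.cast_mul]
    linear_combination (x.choose k * c k : ℚ) * hdiv'.symm
  rw [isIntPoly_iff_mem_liftsRing, binomial_expansion]
  refine sum_mem fun k _ => mul_mem ?_ (RingHom.mem_range_self _ _)
  exact (lifts_iff_liftsRing _ _).1 (C_mem_lifts _ _)

lemma isIntValued_of_evalPS {n : ℕ} {P : ℚ[X]} (hP : evalPS n P) : IsIntValued P :=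
  fun x => ⟨∑ k ∈ range (x + 1), (k : ℤ) ^ n, by rw [hP x]; push_cast; rfl⟩

lemma fwdDiff_eval_of_evalPS {n : ℕ} {P : ℚ[X]} (hP : evalPS n P) :
    Δ_[1] P.eval = ((X + 1) ^ n : ℚ[X]).eval := by
  have hshift : P.comp (X + 1) - P = (X + 1) ^ n := eq_of_eval_natCast_eq fun x => by
    have hsucc := hP (x + 1)
    push_cast at hsucc
    simp [eval_comp, hsucc, hP x, sum_range_succ]
  funext x
  simp [fwdDiff, ← hshift, eval_comp]

theorem stmt5 (n : ℕ) (P : Polynomial ℚ) (d : ℕ)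
    (hP : evalPS n P) (hd : isDenom P d) (p : ℕ) (hp : p.Prime)
    (hpd : p ∣ d) : p ≤ n + 1 := by
  have hdeg : P.natDegree ≤ n + 1 :=
    natDegree_le_of_fwdDiff_eval_eq (by compute_degree!) (fwdDiff_eval_of_evalPS hP)
  have hdvd : d ∣ (n + 1)! :=
    hd.dvd ((isIntValued_of_evalPS hP).isIntPoly_factorial_smul hdeg)
  exact hp.dvd_factorial.1 (hpd.trans hdvd)
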